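/- Let f : [0,∞) × [0,1] → ℝ be continuous with continuous partial derivative ∂f/∂t. Define u(t,x) = ∫₀ᵗ (e^{t−τ} − 1) f(τ,x) dτ − 3x ∫₀ᵗ ∫₀¹ e^{t−τ} s f(τ,s) ds dτ. Then u has continuous partial derivatives ∂u/∂t and ∂²u/∂t², and satisfies, for all t ≥ 0 and x ∈ [0,1], the second-order degenerate integro-differential equation ∂²u/∂t²(t,x) − 3 ∫₀¹ x s ∂²u/∂t²(t,s) ds = ∂u/∂t(t,x) + f(t,x), together with the initial conditions u(0,x) = 0 and ∂u/∂t(0,x) − 3x ∫₀¹ s ∂u/∂t(0,s) ds = 0 for all x ∈ [0,1]. -/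

import Mathlib

/-- The explicit solution of Example 3:
`u(t,x) = ∫₀ᵗ (e^{t−τ} − 1) f(τ,x) dτ − 3x ∫₀ᵗ ∫₀¹ e^{t−τ} s f(τ,s) ds dτ`. -/
noncomputable def uSol2 (f : ℝ → ℝ → ℝ) (t x : ℝ) : ℝ :=
  (∫ τ in (0:ℝ)..t, (Real.exp (t - τ) - 1) * f τ x)
    - 3 * x * ∫ τ in (0:ℝ)..t, ∫ s in (0:ℝ)..1, Real.exp (t - τ) * (s * f τ s)

/-!
With `m(t) = ∫₀¹ s f(t,s) ds` and the Duhamel integral `D g (t) = ∫₀ᵗ e^{t−τ} g(τ) dτ`, which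
solves `y' = y + g`, one has `u = D f(·,x) − ∫₀ᵗ f(τ,x) dτ − 3x D m`. Differentiating,
`u_t = D f(·,x) − 3x (D m + m)` and `u_tt = u_t + f − 3x m'`. By Fubini the first moment
`∫₀¹ s u_t(t,s) ds` equals `−m(t)`, and since `∫₀¹ s · 3s ds = 1` that of `u_tt` is `−m'(t)`; the
equation and both initial conditions are then algebraic identities. To apply results on
parametric integrals, `f` and `∂f/∂t` are first extended continuously to the whole plane,
which does not change `u` on `[0, ∞) × [0, 1]`.
-/

open Set intervalIntegral Real Function
open MeasureTheory (volume)

theorem intervalIntegral_swap_of_continuous {h : ℝ → ℝ → ℝ} (hh : Continuous (uncurry h))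
    (a b c d : ℝ) :
    ∫ x in a..b, ∫ y in c..d, h x y = ∫ y in c..d, ∫ x in a..b, h x y :=
  MeasureTheory.intervalIntegral_intervalIntegral_swap <|
    (hh.continuousOn.integrableOn_compact (isCompact_uIcc.prod isCompact_uIcc)).mono_set
      (prod_mono uIoc_subset_uIcc uIoc_subset_uIcc)

theorem hasDerivWithinAt_intervalIntegral_Ici {G G' : ℝ → ℝ → ℝ} {a b t₀ t : ℝ}
    (hG : Continuous (uncurry G)) (hG' : Continuous (uncurry G'))
    (hderiv : ∀ s ∈ uIcc a b, ∀ τ ∈ Ici t₀, HasDerivWithinAt (G · s) (G' τ s) (Ici t₀) τ)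
    (ht : t ∈ Ici t₀) :
    HasDerivWithinAt (fun τ => ∫ s in a..b, G τ s) (∫ s in a..b, G' t s) (Ici t₀) t := by
  have hG's : Continuous fun τ => ∫ s in a..b, G' τ s :=
    continuous_parametric_intervalIntegral_of_continuous' hG' a b
  have hftc : ∀ τ ∈ Ici t₀,
      ∫ s in a..b, G τ s = (∫ s in a..b, G t₀ s) + ∫ σ in t₀..τ, ∫ s in a..b, G' σ s := by
    intro τ hτ
    have hslice : ∀ s ∈ uIcc a b, ∫ σ in t₀..τ, G' σ s = G τ s - G t₀ s := fun s hs =>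
      integral_eq_sub_of_hasDerivAt_of_le hτ (hG.uncurry_right s).continuousOn
        (fun σ hσ => (hderiv s hs σ hσ.1.le).hasDerivAt (Ici_mem_nhds hσ.1))
        ((hG'.uncurry_right s).intervalIntegrable _ _)
    rw [intervalIntegral_swap_of_continuous hG', integral_congr hslice,
      integral_sub ((hG.uncurry_left τ).intervalIntegrable _ _)
        ((hG.uncurry_left t₀).intervalIntegrable _ _)]
    ring
  exact ((hG's.integral_hasStrictDerivAt t₀ t).hasDerivAt.const_add _).hasDerivWithinAt.congr
    hftc (hftc t ht)

noncomputable def duhamel (g : ℝ → ℝ) (t : ℝ) : ℝ :=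
  ∫ τ in (0:ℝ)..t, exp (t - τ) * g τ

theorem duhamel_zero (g : ℝ → ℝ) : duhamel g 0 = 0 :=
  integral_same

theorem duhamel_eq_exp_mul (g : ℝ → ℝ) (t : ℝ) :
    duhamel g t = exp t * ∫ τ in (0:ℝ)..t, exp (-τ) * g τ := by
  simp_rw [duhamel, sub_eq_add_neg, exp_add, mul_assoc, integral_const_mul]

theorem hasDerivAt_duhamel {g : ℝ → ℝ} (hg : Continuous g) (t : ℝ) :
    HasDerivAt (duhamel g) (duhamel g t + g t) t := by
  have hprim : HasStrictDerivAt (fun u => ∫ τ in (0:ℝ)..u, exp (-τ) * g τ)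
      (exp (-t) * g t) t :=
    Continuous.integral_hasStrictDerivAt (by fun_prop) 0 t
  rw [show duhamel g = _ from funext (duhamel_eq_exp_mul g)]
  refine ((hasDerivAt_exp t).mul hprim.hasDerivAt).congr_deriv ?_
  rw [← mul_assoc, ← exp_add, add_neg_cancel, exp_zero, one_mul]

theorem continuous_duhamel {g : ℝ → ℝ} (hg : Continuous g) : Continuous (duhamel g) :=
  continuous_iff_continuousAt.2 fun t => (hasDerivAt_duhamel hg t).continuousAt

theorem continuous_duhamel_uncurry {G : ℝ → ℝ → ℝ} (hG : Continuous (uncurry G)) :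
    Continuous fun p : ℝ × ℝ => duhamel (G · p.2) p.1 :=
  continuous_parametric_intervalIntegral_of_continuous
    (f := fun p τ => exp (p.1 - τ) * G τ p.2) (by fun_prop) continuous_fst

/-- The projector of the paper is `P g x = 3 * x * firstMoment g`. -/
noncomputable def firstMoment (g : ℝ → ℝ) : ℝ :=
  ∫ s in (0:ℝ)..1, s * g s

theorem firstMoment_add {g h : ℝ → ℝ} (hg : IntervalIntegrable g volume 0 1)
    (hh : IntervalIntegrable h volume 0 1) :
    firstMoment (fun s => g s + h s) = firstMoment g + firstMoment h := by
  simp_rw [firstMoment, mul_add]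
  exact integral_add (hg.continuousOn_mul (continuousOn_id' _))
    (hh.continuousOn_mul (continuousOn_id' _))

theorem firstMoment_sub_three_mul {g : ℝ → ℝ} (hg : IntervalIntegrable g volume 0 1) (c : ℝ) :
    firstMoment (fun s => g s - 3 * s * c) = firstMoment g - c := by
  have hsq : ∀ s : ℝ, s * (g s - 3 * s * c) = s * g s - 3 * c * s ^ 2 := fun s => by ring
  simp_rw [firstMoment, hsq]
  rw [integral_sub (hg.continuousOn_mul (continuousOn_id' _))
      ((by fun_prop : Continuous fun s : ℝ => 3 * c * s ^ 2).intervalIntegrable _ _),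
    integral_const_mul, integral_pow]
  ring

theorem continuous_firstMoment {G : ℝ → ℝ → ℝ} (hG : Continuous (uncurry G)) :
    Continuous fun t => firstMoment (G t) :=
  continuous_parametric_intervalIntegral_of_continuous' (f := fun t s => s * G t s)
    (by fun_prop) 0 1

theorem firstMoment_duhamel {G : ℝ → ℝ → ℝ} (hG : Continuous (uncurry G)) (t : ℝ) :
    firstMoment (fun s => duhamel (G · s) t) = duhamel (fun τ => firstMoment (G τ)) t := by
  simp_rw [firstMoment, duhamel, ← integral_const_mul]
  rw [intervalIntegral_swap_of_continuous (h := fun s τ => s * (exp (t - τ) * G τ s))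
    (by fun_prop)]
  simp_rw [mul_left_comm]

theorem uSol2_eq_duhamel {F : ℝ → ℝ → ℝ} (hF : Continuous (uncurry F)) (t x : ℝ) :
    uSol2 F t x = duhamel (F · x) t - (∫ τ in (0:ℝ)..t, F τ x)
      - 3 * x * duhamel (fun τ => firstMoment (F τ)) t := by
  simp_rw [uSol2, sub_one_mul, integral_const_mul]
  rw [integral_sub ((by fun_prop : Continuous fun τ => exp (t - τ) * F τ x).intervalIntegrable _ _)
    ((hF.uncurry_right x).intervalIntegrable _ _)]
  rfl

theorem uSol2_congr {f g : ℝ → ℝ → ℝ} (hfg : EqOn (uncurry f) (uncurry g) (Ici 0 ×ˢ Icc 0 1))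
    {t x : ℝ} (ht : 0 ≤ t) (hx : x ∈ Icc (0:ℝ) 1) : uSol2 f t x = uSol2 g t x := by
  have hfg' : ∀ τ ∈ uIcc 0 t, ∀ s ∈ Icc (0:ℝ) 1, f τ s = g τ s := fun τ hτ s hs =>
    hfg (mk_mem_prod (uIcc_of_le ht ▸ hτ).1 hs)
  simp only [uSol2]
  rw [integral_congr fun τ hτ => by rw [hfg' τ hτ x hx],
    integral_congr fun τ hτ => integral_congr fun s hs => by
      rw [hfg' τ hτ s (by rwa [uIcc_of_le zero_le_one] at hs)]]

/-- The time derivative of `uSol2 F`. -/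
noncomputable def solDt (F : ℝ → ℝ → ℝ) (t x : ℝ) : ℝ :=
  duhamel (F · x) t - 3 * x * (duhamel (fun τ => firstMoment (F τ)) t + firstMoment (F t))

/-- The second time derivative of `uSol2 F`, where `Ft = ∂F/∂t`. -/
noncomputable def solDtt (F Ft : ℝ → ℝ → ℝ) (t x : ℝ) : ℝ :=
  solDt F t x + F t x - 3 * x * firstMoment (Ft t)

section

variable {F Ft : ℝ → ℝ → ℝ}

theorem continuous_solDt (hF : Continuous (uncurry F)) :
    Continuous fun p : ℝ × ℝ => solDt F p.1 p.2 := by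
  have hmoment := continuous_firstMoment hF
  exact (continuous_duhamel_uncurry hF).sub ((continuous_const.mul continuous_snd).mul
    (((continuous_duhamel hmoment).add hmoment).comp continuous_fst))

theorem continuous_solDtt (hF : Continuous (uncurry F)) (hFt : Continuous (uncurry Ft)) :
    Continuous fun p : ℝ × ℝ => solDtt F Ft p.1 p.2 :=
  ((continuous_solDt hF).add hF).sub ((continuous_const.mul continuous_snd).mul
    ((continuous_firstMoment hFt).comp continuous_fst))

theorem hasDerivAt_uSol2 (hF : Continuous (uncurry F)) (t x : ℝ) :
    HasDerivAt (uSol2 F · x) (solDt F t x) t := by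
  rw [show (uSol2 F · x) = _ from funext fun t => uSol2_eq_duhamel hF t x]
  refine (((hasDerivAt_duhamel (hF.uncurry_right x) t).sub
    ((hF.uncurry_right x).integral_hasStrictDerivAt 0 t).hasDerivAt).sub
    ((hasDerivAt_duhamel (continuous_firstMoment hF) t).const_mul (3 * x))).congr_deriv ?_
  simp only [solDt]
  ring

theorem hasDerivWithinAt_solDt (hF : Continuous (uncurry F)) (hFt : Continuous (uncurry Ft))
    (hderiv : ∀ x ∈ Icc (0:ℝ) 1, ∀ t ∈ Ici (0:ℝ), HasDerivWithinAt (F · x) (Ft t x) (Ici 0) t)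
    {t : ℝ} (ht : 0 ≤ t) (x : ℝ) :
    HasDerivWithinAt (solDt F · x) (solDtt F Ft t x) (Ici 0) t := by
  have hmoment : HasDerivWithinAt (fun τ => firstMoment (F τ)) (firstMoment (Ft t)) (Ici 0) t :=
    hasDerivWithinAt_intervalIntegral_Ici (G := fun τ s => s * F τ s) (by fun_prop) (by fun_prop)
      (fun s hs τ hτ => (hderiv s (by rwa [uIcc_of_le zero_le_one] at hs) τ hτ).const_mul s) ht
  refine ((hasDerivAt_duhamel (hF.uncurry_right x) t).hasDerivWithinAt.sub
    (((hasDerivAt_duhamel (continuous_firstMoment hF) t).hasDerivWithinAt.add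
      hmoment).const_mul (3 * x))).congr_deriv ?_
  simp only [solDtt, solDt]
  ring

theorem firstMoment_solDt (hF : Continuous (uncurry F)) (t : ℝ) :
    firstMoment (solDt F t) = -firstMoment (F t) := by
  have hslice : Continuous fun s => duhamel (F · s) t :=
    (continuous_duhamel_uncurry hF).comp (.prodMk_right t)
  show firstMoment (fun s => duhamel (F · s) t - 3 * s * _) = _
  rw [firstMoment_sub_three_mul (hslice.intervalIntegrable _ _), firstMoment_duhamel hF]
  ring

theorem firstMoment_solDtt (hF : Continuous (uncurry F)) (t : ℝ) :
    firstMoment (solDtt F Ft t) = -firstMoment (Ft t) := by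
  have hslice : Continuous fun s => solDt F t s := (continuous_solDt hF).comp (.prodMk_right t)
  show firstMoment (fun s => (solDt F t s + F t s) - 3 * s * _) = _
  rw [firstMoment_sub_three_mul (g := fun s => solDt F t s + F t s)
      ((hslice.add (hF.uncurry_left t)).intervalIntegrable _ _),
    firstMoment_add (hslice.intervalIntegrable _ _) ((hF.uncurry_left t).intervalIntegrable _ _),
    firstMoment_solDt hF]
  ring

theorem solDtt_sub_three_mul_firstMoment (hF : Continuous (uncurry F)) (t x : ℝ) :
    solDtt F Ft t x - 3 * x * firstMoment (solDtt F Ft t) = solDt F t x + F t x := by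
  rw [firstMoment_solDtt hF, solDtt]
  ring

theorem solDt_zero_sub_three_mul_firstMoment (hF : Continuous (uncurry F)) (x : ℝ) :
    solDt F 0 x - 3 * x * firstMoment (solDt F 0) = 0 := by
  rw [firstMoment_solDt hF, solDt, duhamel_zero, duhamel_zero]
  ring

end

noncomputable def clampExtend (f : ℝ → ℝ → ℝ) (t x : ℝ) : ℝ :=
  f (max t 0) (projIcc 0 1 zero_le_one x)

theorem clampExtend_of_mem {f : ℝ → ℝ → ℝ} {t x : ℝ} (ht : 0 ≤ t) (hx : x ∈ Icc (0:ℝ) 1) :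
    clampExtend f t x = f t x := by
  rw [clampExtend, max_eq_left ht, projIcc_of_mem _ hx]

theorem continuous_clampExtend {f : ℝ → ℝ → ℝ}
    (hf : ContinuousOn (fun p : ℝ × ℝ => f p.1 p.2) (Ici 0 ×ˢ Icc 0 1)) :
    Continuous (uncurry (clampExtend f)) :=
  hf.comp_continuous ((continuous_fst.max continuous_const).prodMk
    (continuous_subtype_val.comp (continuous_projIcc.comp continuous_snd)))
    fun p => mk_mem_prod (mem_Ici.2 (le_max_right p.1 0)) (projIcc 0 1 zero_le_one p.2).2

/-- If `f` is continuous on `[0,∞) × [0,1]` with continuous partial derivative `∂f/∂t`,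
then `u = uSol2 f` has continuous partial derivatives `∂u/∂t` and `∂²u/∂t²` and satisfies
the degenerate equation
`∂²u/∂t²(t,x) − 3 ∫₀¹ x s ∂²u/∂t²(t,s) ds = ∂u/∂t(t,x) + f(t,x)` on `[0,∞) × [0,1]`,
with `u(0,x) = 0` and `∂u/∂t(0,x) − 3x ∫₀¹ s ∂u/∂t(0,s) ds = 0` for `x ∈ [0,1]`. -/
theorem stmt_8 (f ft : ℝ → ℝ → ℝ)
    (hf : ContinuousOn (fun p : ℝ × ℝ => f p.1 p.2) (Set.Ici 0 ×ˢ Set.Icc 0 1))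
    (hft : ∀ x ∈ Set.Icc (0:ℝ) 1, ∀ t ∈ Set.Ici (0:ℝ),
      HasDerivWithinAt (fun τ => f τ x) (ft t x) (Set.Ici 0) t)
    (hftc : ContinuousOn (fun p : ℝ × ℝ => ft p.1 p.2) (Set.Ici 0 ×ˢ Set.Icc 0 1)) :
    ∃ ut utt : ℝ → ℝ → ℝ,
      ContinuousOn (fun p : ℝ × ℝ => ut p.1 p.2) (Set.Ici 0 ×ˢ Set.Icc 0 1) ∧
      ContinuousOn (fun p : ℝ × ℝ => utt p.1 p.2) (Set.Ici 0 ×ˢ Set.Icc 0 1) ∧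
      (∀ x ∈ Set.Icc (0:ℝ) 1, ∀ t ∈ Set.Ici (0:ℝ),
        HasDerivWithinAt (fun τ => uSol2 f τ x) (ut t x) (Set.Ici 0) t) ∧
      (∀ x ∈ Set.Icc (0:ℝ) 1, ∀ t ∈ Set.Ici (0:ℝ),
        HasDerivWithinAt (fun τ => ut τ x) (utt t x) (Set.Ici 0) t) ∧
      (∀ t ∈ Set.Ici (0:ℝ), ∀ x ∈ Set.Icc (0:ℝ) 1,
        utt t x - 3 * x * ∫ s in (0:ℝ)..1, s * utt t s = ut t x + f t x) ∧
      (∀ x ∈ Set.Icc (0:ℝ) 1, uSol2 f 0 x = 0) ∧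
      (∀ x ∈ Set.Icc (0:ℝ) 1,
        ut 0 x - 3 * x * ∫ s in (0:ℝ)..1, s * ut 0 s = 0) := by
  have hF := continuous_clampExtend hf
  have hFt := continuous_clampExtend hftc
  have hFf : EqOn (uncurry (clampExtend f)) (uncurry f) (Ici 0 ×ˢ Icc 0 1) := fun p hp =>
    clampExtend_of_mem hp.1 hp.2
  have hderiv : ∀ x ∈ Icc (0:ℝ) 1, ∀ t ∈ Ici (0:ℝ),
      HasDerivWithinAt (clampExtend f · x) (clampExtend ft t x) (Ici 0) t := fun x hx t ht => by
    rw [clampExtend_of_mem ht hx]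
    exact (hft x hx t ht).congr (fun τ hτ => clampExtend_of_mem hτ hx) (clampExtend_of_mem ht hx)
  refine ⟨solDt (clampExtend f), solDtt (clampExtend f) (clampExtend ft),
    (continuous_solDt hF).continuousOn, (continuous_solDtt hF hFt).continuousOn,
    fun x hx t ht => ?_, fun x _ t ht => hasDerivWithinAt_solDt hF hFt hderiv ht x,
    fun t ht x hx => ?_, fun x _ => by simp [uSol2],
    fun x _ => solDt_zero_sub_three_mul_firstMoment hF x⟩
  · exact (hasDerivAt_uSol2 hF t x).hasDerivWithinAt.congr
      (fun τ hτ => (uSol2_congr hFf hτ hx).symm) (uSol2_congr hFf ht hx).symm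
  · exact (solDtt_sub_three_mul_firstMoment hF t x).trans (by rw [clampExtend_of_mem ht hx])
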